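/- arXiv:2008.08043 — 3 statements merged into one kernel-verified Lean document; each statement's English description precedes it below -/
import Mathlib

section
/- Let γ > 0, k > 0, h > 0 be real numbers with kγ < 2 and k/h² < γ/4, set r = k/h, and let θ be a real number with sin θ ≠ 0. Then both complex roots μ of the quadratic equation μ² + (γk − 2)μ + (1 − kγ + 4 r² sin²θ) = 0 have modulus |μ| < 1. -/
/-!
The roots are those of the real monic quadratic `z² + b z + c` with `b = γk − 2` and
`c = 1 − kγ + 4 r² sin²θ`, and such a quadratic has both roots in the open unit disc as soon as
`c < 1` and `|b| < 1 + c` (the Schur–Cohn–Jury conditions). The second condition holds because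
`sin θ ≠ 0` and `kγ < 2`; the first because `4 r² sin²θ ≤ 4 k (k / h²) < kγ`.
-/

lemma abs_lt_one_of_quadratic_eq_zero {b c x : ℝ} (hc : c < 1) (hb : |b| < 1 + c)
    (hx : x ^ 2 + b * x + c = 0) : |x| < 1 := by
  obtain ⟨hb₁, hb₂⟩ := abs_lt.mp hb
  -- `x² + b x + c` is positive at `±1` and has its vertex `-b/2` inside `(-1, 1)`.
  rw [abs_lt]
  constructor
  · by_contra! h
    nlinarith [mul_nonneg (neg_nonneg.mpr (by linarith : x + 1 ≤ 0))
      (by linarith : (0 : ℝ) ≤ -(x - 1 + b))]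
  · by_contra! h
    nlinarith [mul_nonneg (by linarith : (0 : ℝ) ≤ x - 1) (by linarith : (0 : ℝ) ≤ x + 1 + b)]

lemma Complex.norm_lt_one_of_quadratic_eq_zero {b c : ℝ} (hc : c < 1) (hb : |b| < 1 + c)
    {μ : ℂ} (hμ : μ ^ 2 + (b : ℂ) * μ + (c : ℂ) = 0) : ‖μ‖ < 1 := by
  have hre : μ.re ^ 2 - μ.im ^ 2 + b * μ.re + c = 0 := by
    simpa [sq] using congrArg Complex.re hμ
  have him : μ.im * (2 * μ.re + b) = 0 := by
    have := congrArg Complex.im hμ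
    simp only [sq, Complex.add_im, Complex.mul_im, Complex.ofReal_re, Complex.ofReal_im,
      Complex.zero_im] at this
    linear_combination this
  suffices h : μ.re ^ 2 + μ.im ^ 2 < 1 by
    rw [← Complex.normSq_add_mul_I μ.re μ.im, Complex.re_add_im] at h
    rwa [← sq_lt_one_iff₀ (norm_nonneg μ), Complex.sq_norm]
  rcases mul_eq_zero.mp him with hreal | hvertex
  · have hx := abs_lt_one_of_quadratic_eq_zero hc hb (by simpa [hreal] using hre)
    rw [hreal]
    nlinarith [sq_abs μ.re, abs_nonneg μ.re]
  · have hre' : μ.re = -b / 2 := by linarith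
    have : μ.re ^ 2 + μ.im ^ 2 = c := by
      rw [hre'] at hre ⊢
      linear_combination -hre
    linarith

theorem explicit_scheme_roots_in_unit_disc_general (γ k h θ : ℝ)
    (hk : 0 < k) (hh : 0 < h)
    (hkγ : k * γ < 2) (hkh : k / h ^ 2 < γ / 4)
    (hθ : Real.sin θ ≠ 0) :
    ∀ μ : ℂ,
      μ ^ 2 + ((γ * k - 2 : ℝ) : ℂ) * μ
          + ((1 - k * γ + 4 * (k / h) ^ 2 * Real.sin θ ^ 2 : ℝ) : ℂ) = 0 →
        ‖μ‖ < 1 := by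
  intro μ hμ
  have hpos : 0 < 4 * (k / h) ^ 2 * Real.sin θ ^ 2 := by positivity
  have hlt : 4 * (k / h) ^ 2 * Real.sin θ ^ 2 < k * γ :=
    calc 4 * (k / h) ^ 2 * Real.sin θ ^ 2
        ≤ 4 * (k / h) ^ 2 := by nlinarith [Real.sin_sq_le_one θ]
      _ = 4 * k * (k / h ^ 2) := by ring
      _ < k * γ := by nlinarith
  refine Complex.norm_lt_one_of_quadratic_eq_zero (by linarith) ?_ hμ
  rw [abs_lt]
  constructor <;> nlinarith

/-- Stability of the explicit FD-(0,1) scheme (Proposition 3.1, scalar form):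
under the stability conditions `kγ < 2` and `k/h² < γ/4`, both complex roots of
the characteristic equation `μ² + (γk − 2)μ + (1 − kγ + 4 r² sin²θ) = 0`
(with `r = k/h`, `sin θ ≠ 0`) have modulus strictly less than 1. -/
theorem explicit_scheme_roots_in_unit_disc (γ k h θ : ℝ)
    (hγ : 0 < γ) (hk : 0 < k) (hh : 0 < h)
    (hkγ : k * γ < 2) (hkh : k / h ^ 2 < γ / 4)
    (hθ : Real.sin θ ≠ 0) :
    ∀ μ : ℂ,
      μ ^ 2 + ((γ * k - 2 : ℝ) : ℂ) * μ
          + ((1 - k * γ + 4 * (k / h) ^ 2 * Real.sin θ ^ 2 : ℝ) : ℂ) = 0 →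
        ‖μ‖ < 1 :=
  explicit_scheme_roots_in_unit_disc_general γ k h θ hk hh hkγ hkh hθ
end

section
/- Let N ≥ 2 be an integer, let A be the (N−1)×(N−1) real tridiagonal matrix with −2 on the diagonal and 1 on the sub- and super-diagonals, let h > 0, γ > 0, k > 0 be real numbers, and let M be the (2N−2)×(2N−2) complex block matrix M = [[0, I],[(1/h²)A, −γ I]]. If kγ < 2 and k/h² < γ/4, then every eigenvalue μ of the amplification matrix I + kM satisfies |μ| < 1. -/
/-!
If `(u, v)` is an eigenvector of `I + kM` for `μ`, then `k v = (μ - 1) u`, so `u ≠ 0` and `u` is an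
eigenvector of `A` for `a = h² (μ - 1) (μ - 1 + kγ) / k²`. Factoring `-A = DᴴD` and `A + 4 = EᴴE`
with lower bidiagonal `D`, `E` (entries `1, -1` and `1, 1`), where `D` is injective, gives
`-4 ≤ a < 0`. So `z = μ - 1` solves `z (z + kγ) = c` with `-kγ < -4k²/h² ≤ c < 0`, and every such
root satisfies `|1 + z| < 1` as long as `kγ < 2`.
-/

open Matrix
open scoped ComplexOrder

theorem Complex.norm_lt_one_of_mul_sub_one_add_eq {μ c : ℂ} {g : ℝ} (hg : g < 2) (hc : c < 0)
    (hgc : -(g : ℂ) < c) (h : (μ - 1) * (μ - 1 + g) = c) : ‖μ‖ < 1 := by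
  obtain ⟨hc_re, hc_im⟩ := Complex.lt_def.mp hc
  have hgc_re : -g < c.re := by simpa using (Complex.lt_def.mp hgc).1
  simp only [Complex.zero_re, Complex.zero_im] at hc_re hc_im
  have hre : (μ.re - 1) * (μ.re - 1 + g) - μ.im ^ 2 = c.re := by
    simpa [Complex.mul_re, sq] using congrArg Complex.re h
  have him : μ.im * (2 * μ.re - 2 + g) = 0 := by
    have := congrArg Complex.im h
    simp only [Complex.mul_im, Complex.sub_re, Complex.sub_im, Complex.add_re, Complex.add_im,
      Complex.one_re, Complex.one_im, Complex.ofReal_re, Complex.ofReal_im, hc_im] at this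
    linear_combination this
  rw [Complex.norm_eq_sqrt_sq_add_sq, Real.sqrt_lt' one_pos, one_pow]
  -- Either `μ` is real and lies in `(1 - g, 1)`, or `Re μ = 1 - g/2` and `|μ|² = 1 - g - c`.
  rcases mul_eq_zero.mp him with hy | hx
  · have h1 : μ.re - 1 < 0 := by nlinarith
    have h2 : 0 < μ.re - 1 + g := by nlinarith
    rw [hy] at hre ⊢
    nlinarith
  · nlinarith

theorem Matrix.exists_mulVec_eq_smul_of_mem_spectrum {K n : Type*} [Field K] [Fintype n]
    [DecidableEq n] {A : Matrix n n K} {μ : K} (hμ : μ ∈ spectrum K A) :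
    ∃ v ≠ 0, A *ᵥ v = μ • v := by
  rw [← spectrum_toLin', ← Module.End.hasEigenvalue_iff_mem_spectrum] at hμ
  obtain ⟨v, hv⟩ := hμ.exists_hasEigenvector
  exact ⟨v, hv.2, by simpa [toLin'_apply] using Module.End.mem_eigenspace_iff.mp hv.1⟩

theorem mulVec_eq_smul_of_one_add_smul_fromBlocks_mulVec_eq_smul {K n : Type*} [Field K]
    [Fintype n] [DecidableEq n] {B : Matrix n n K} {c k μ : K} (hk : k ≠ 0) {w : n ⊕ n → K}
    (hw : w ≠ 0) (h : (1 + k • fromBlocks 0 1 B (c • 1)) *ᵥ w = μ • w) :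
    w ∘ Sum.inl ≠ 0 ∧
      B *ᵥ (w ∘ Sum.inl) = ((μ - 1) * (μ - 1 - k * c) / k ^ 2) • (w ∘ Sum.inl) := by
  rw [add_mulVec, one_mulVec, smul_mulVec, fromBlocks_mulVec] at h
  have hu (i : n) : k * w (Sum.inr i) = (μ - 1) * w (Sum.inl i) := by
    have := congrFun h (Sum.inl i)
    simp only [Pi.add_apply, Pi.smul_apply, Sum.elim_inl, zero_mulVec, one_mulVec, zero_add,
      Function.comp_apply, smul_eq_mul] at this
    linear_combination this
  have hv (i : n) : k * (B *ᵥ (w ∘ Sum.inl)) i = (μ - 1 - k * c) * w (Sum.inr i) := by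
    have := congrFun h (Sum.inr i)
    simp only [Pi.add_apply, Pi.smul_apply, Sum.elim_inr, smul_mulVec, one_mulVec,
      Function.comp_apply, smul_eq_mul] at this
    linear_combination this
  refine ⟨fun h0 => hw ?_, funext fun i => ?_⟩
  · ext (i | i)
    · exact congrFun h0 i
    · have := hu i
      rw [show w (Sum.inl i) = 0 from congrFun h0 i, mul_zero] at this
      exact (mul_eq_zero.mp this).resolve_left hk
  · rw [Pi.smul_apply, smul_eq_mul, Function.comp_apply]
    field_simp
    linear_combination k * hv i + (μ - 1 - k * c) * hu i

section RCLike

variable {𝕜 : Type*} [RCLike 𝕜]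

theorem Matrix.PosSemidef.nonneg_of_mulVec_eq_smul {n : Type*} [Fintype n] {P : Matrix n n 𝕜}
    (hP : P.PosSemidef) {u : n → 𝕜} (hu : u ≠ 0) {a : 𝕜} (h : P *ᵥ u = a • u) : 0 ≤ a := by
  have hr : 0 < star u ⬝ᵥ u := dotProduct_star_self_pos_iff.mpr hu
  have := hP.dotProduct_mulVec_nonneg u
  rw [h, dotProduct_smul, smul_eq_mul] at this
  simpa [hr.ne'] using mul_nonneg this (inv_pos.mpr hr).le

theorem Matrix.PosDef.pos_of_mulVec_eq_smul {n : Type*} [Fintype n] {P : Matrix n n 𝕜}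
    (hP : P.PosDef) {u : n → 𝕜} (hu : u ≠ 0) {a : 𝕜} (h : P *ᵥ u = a • u) : 0 < a := by
  have hr : 0 < star u ⬝ᵥ u := dotProduct_star_self_pos_iff.mpr hu
  have := hP.dotProduct_mulVec_pos hu
  rw [h, dotProduct_smul, smul_eq_mul] at this
  exact (pos_iff_pos_of_mul_pos this).mpr hr

end RCLike

def bidiagonal (R : Type*) [Zero R] [One R] (s : R) (n : ℕ) : Matrix (Fin (n + 1)) (Fin n) R :=
  fun j i => if j = i.castSucc then 1 else if j = i.succ then s else 0

theorem bidiagonal_eq_add {R : Type*} [AddZeroClass R] [One R] (s : R) {n : ℕ}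
    (j : Fin (n + 1)) (i : Fin n) :
    bidiagonal R s n j i = (if j = i.castSucc then 1 else 0) + (if j = i.succ then s else 0) := by
  by_cases h : j = i.castSucc
  · simp [bidiagonal, h, (Fin.castSucc_lt_succ (i := i)).ne]
  · simp [bidiagonal, h]

theorem conjTranspose_bidiagonal {R : Type*} [Semiring R] [StarRing R] {s : R}
    (hs : star s = s) (n : ℕ) : (bidiagonal R s n)ᴴ = (bidiagonal R s n)ᵀ := by
  ext i j
  simp only [conjTranspose_apply, transpose_apply, bidiagonal]
  split_ifs <;> simp [hs]

theorem transpose_bidiagonal_mul_self_apply {R : Type*} [CommRing R] (s : R) {n : ℕ}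
    (i i' : Fin n) :
    ((bidiagonal R s n)ᵀ * bidiagonal R s n) i i' =
      if i = i' then 1 + s * s else if (i : ℕ) + 1 = i' ∨ (i' : ℕ) + 1 = i then s else 0 := by
  simp only [mul_apply, transpose_apply, bidiagonal_eq_add, add_mul, mul_add,
    Finset.sum_add_distrib, ite_mul, mul_ite, one_mul, zero_mul, mul_one, mul_zero,
    Finset.sum_ite_eq', Finset.mem_univ, if_true]
  simp only [Fin.ext_iff, Fin.val_castSucc, Fin.val_succ]
  split_ifs <;> first | (exfalso; omega) | ring

theorem bidiagonal_mulVec_zero {R : Type*} [Ring R] (s : R) {n : ℕ} (u : Fin (n + 1) → R) :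
    (bidiagonal R s (n + 1) *ᵥ u) 0 = u 0 := by
  simp only [mulVec, dotProduct, bidiagonal_eq_add, add_mul, ite_mul, one_mul, zero_mul,
    Finset.sum_add_distrib]
  simp [eq_comm (a := (0 : Fin (n + 2)))]

theorem bidiagonal_mulVec_succ_castSucc {R : Type*} [Ring R] (s : R) {n : ℕ}
    (u : Fin (n + 1) → R) (i : Fin n) :
    (bidiagonal R s (n + 1) *ᵥ u) i.castSucc.succ = u i.succ + s * u i.castSucc := by
  simp only [mulVec, dotProduct, bidiagonal_eq_add, add_mul, ite_mul, one_mul, zero_mul,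
    Finset.sum_add_distrib]
  have h1 (x : Fin (n + 1)) : i.castSucc.succ = x.castSucc ↔ x = i.succ := by
    rw [Fin.succ_castSucc, Fin.castSucc_inj, eq_comm]
  have h2 (x : Fin (n + 1)) : i.castSucc.succ = x.succ ↔ x = i.castSucc := by
    rw [Fin.succ_inj, eq_comm]
  simp [h1, h2]

theorem eq_zero_of_bidiagonal_mulVec_eq_zero {R : Type*} [Ring R] (s : R) :
    ∀ {n : ℕ} {u : Fin n → R}, bidiagonal R s n *ᵥ u = 0 → u = 0
  | 0, u, _ => Subsingleton.elim u 0
  | n + 1, u, hu => by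
    suffices ∀ i, u i = 0 from funext this
    intro i
    induction i using Fin.induction with
    | zero => rw [← bidiagonal_mulVec_zero s u, hu, Pi.zero_apply]
    | succ i ih =>
      have := bidiagonal_mulVec_succ_castSucc s u i
      rw [hu, Pi.zero_apply, ih, mul_zero, add_zero] at this
      exact this.symm

theorem mulVec_bidiagonal_injective {R : Type*} [Ring R] (s : R) (n : ℕ) :
    Function.Injective (bidiagonal R s n).mulVec := fun u v huv =>
  sub_eq_zero.mp <| eq_zero_of_bidiagonal_mulVec_eq_zero s <| by rw [mulVec_sub, huv, sub_self]

def discreteLaplacian (R : Type*) [Ring R] (n : ℕ) : Matrix (Fin n) (Fin n) R :=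
  fun i j => if (i : ℕ) = j then -2 else if (i : ℕ) + 1 = j ∨ (j : ℕ) + 1 = i then 1 else 0

theorem discreteLaplacian_map {R S : Type*} [Ring R] [Ring S] (f : R →+* S) (n : ℕ) :
    (discreteLaplacian R n).map f = discreteLaplacian S n := by
  ext i j
  simp only [map_apply, discreteLaplacian]
  split_ifs <;> simp [map_ofNat]

theorem transpose_bidiagonal_neg_one_mul_self (R : Type*) [CommRing R] (n : ℕ) :
    (bidiagonal R (-1) n)ᵀ * bidiagonal R (-1) n = -discreteLaplacian R n := by
  ext i j
  rw [transpose_bidiagonal_mul_self_apply, neg_apply, discreteLaplacian]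
  simp only [Fin.ext_iff]
  split_ifs <;> norm_num

theorem transpose_bidiagonal_one_mul_self (R : Type*) [CommRing R] (n : ℕ) :
    (bidiagonal R 1 n)ᵀ * bidiagonal R 1 n = discreteLaplacian R n + (4 : R) • 1 := by
  ext i j
  rw [transpose_bidiagonal_mul_self_apply, Matrix.add_apply, Matrix.smul_apply, one_apply,
    discreteLaplacian]
  simp only [Fin.ext_iff]
  split_ifs <;> norm_num

section RCLike

variable {𝕜 : Type*} [RCLike 𝕜] {n : ℕ} {u : Fin n → 𝕜} {a : 𝕜}

theorem neg_of_discreteLaplacian_mulVec_eq_smul (hu : u ≠ 0)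
    (h : discreteLaplacian 𝕜 n *ᵥ u = a • u) : a < 0 := by
  have hpos := PosDef.conjTranspose_mul_self _ (mulVec_bidiagonal_injective (-1 : 𝕜) n)
  rw [conjTranspose_bidiagonal (by simp), transpose_bidiagonal_neg_one_mul_self] at hpos
  exact neg_pos.mp <| hpos.pos_of_mulVec_eq_smul hu <| by rw [neg_mulVec, h, neg_smul]

theorem neg_four_le_of_discreteLaplacian_mulVec_eq_smul (hu : u ≠ 0)
    (h : discreteLaplacian 𝕜 n *ᵥ u = a • u) : -4 ≤ a := by
  have hnonneg := posSemidef_conjTranspose_mul_self (bidiagonal 𝕜 1 n)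
  rw [conjTranspose_bidiagonal (star_one 𝕜), transpose_bidiagonal_one_mul_self] at hnonneg
  refine neg_le_iff_add_nonneg.mpr <| hnonneg.nonneg_of_mulVec_eq_smul hu ?_
  rw [add_mulVec, h, smul_mulVec, one_mulVec, add_smul]

end RCLike

theorem explicit_scheme_stable_general (N : ℕ)
    (A : Matrix (Fin (N - 1)) (Fin (N - 1)) ℝ)
    (hA : ∀ i j : Fin (N - 1),
      A i j =
        if (i : ℕ) = (j : ℕ) then -2
        else if (i : ℕ) + 1 = (j : ℕ) ∨ (j : ℕ) + 1 = (i : ℕ) then 1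
        else 0)
    (h γ k : ℝ) (hh : 0 < h) (hk : 0 < k)
    (hkγ : k * γ < 2) (hkh : k / h ^ 2 < γ / 4)
    (M : Matrix (Fin (N - 1) ⊕ Fin (N - 1)) (Fin (N - 1) ⊕ Fin (N - 1)) ℂ)
    (hM : M = Matrix.fromBlocks 0 1
      (((1 / h ^ 2 : ℝ) : ℂ) • A.map (fun x => (x : ℂ))) (-(γ : ℂ) • 1)) :
    ∀ μ ∈ spectrum ℂ ((1 : Matrix (Fin (N - 1) ⊕ Fin (N - 1))
        (Fin (N - 1) ⊕ Fin (N - 1)) ℂ) + (k : ℂ) • M),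
      ‖μ‖ < 1 := by
  intro μ hμ
  have hL : A.map (fun x => (x : ℂ)) = discreteLaplacian ℂ (N - 1) := by
    rw [show A = discreteLaplacian ℝ (N - 1) from Matrix.ext hA]
    exact discreteLaplacian_map Complex.ofRealHom _
  have hk' : (k : ℂ) ≠ 0 := by exact_mod_cast hk.ne'
  have hh' : (h : ℂ) ≠ 0 := by exact_mod_cast hh.ne'
  obtain ⟨w, hw0, hw⟩ := exists_mulVec_eq_smul_of_mem_spectrum hμ
  rw [hM, hL] at hw
  obtain ⟨hu, hBu⟩ := mulVec_eq_smul_of_one_add_smul_fromBlocks_mulVec_eq_smul hk' hw0 hw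
  set a : ℂ := h ^ 2 * ((μ - 1) * (μ - 1 - k * -γ) / k ^ 2)
  have hLu : discreteLaplacian ℂ (N - 1) *ᵥ (w ∘ Sum.inl) = a • (w ∘ Sum.inl) := by
    have hscale : (h : ℂ) ^ 2 * ((1 / h ^ 2 : ℝ) : ℂ) = 1 := by push_cast; field_simp
    rw [smul_mulVec] at hBu
    rw [← smul_smul, ← hBu, smul_smul, hscale, one_smul]
  have hchar : (μ - 1) * (μ - 1 + ((k * γ : ℝ) : ℂ)) = ((k / h) ^ 2 : ℝ) * a := by
    simp only [a]
    push_cast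
    field_simp
    ring
  have hkh' : 0 < (k / h) ^ 2 := by positivity
  refine Complex.norm_lt_one_of_mul_sub_one_add_eq hkγ
    (mul_neg_of_pos_of_neg (by exact_mod_cast hkh')
      (neg_of_discreteLaplacian_mulVec_eq_smul hu hLu)) ?_ hchar
  have hcfl : -(k * γ) < (k / h) ^ 2 * -4 := by
    have : k * (4 * (k / h ^ 2)) < k * γ := mul_lt_mul_of_pos_left (by linarith) hk
    linear_combination this
  calc -((k * γ : ℝ) : ℂ) < ((k / h) ^ 2 : ℝ) * -4 := by exact_mod_cast hcfl
    _ ≤ ((k / h) ^ 2 : ℝ) * a := mul_le_mul_of_nonneg_left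
        (neg_four_le_of_discreteLaplacian_mulVec_eq_smul hu hLu) (by exact_mod_cast hkh'.le)

/-- Proposition 3.1 (stability of the explicit FD-(0,1) scheme, constant
damping): if `kγ < 2` and `k/h² < γ/4`, then every eigenvalue `μ` of the
amplification matrix `I + kM`, where `M = [[0, I],[(1/h²)A, −γI]]` and `A` is
the tridiagonal discrete Laplacian, satisfies `|μ| < 1`. -/
theorem explicit_scheme_stable (N : ℕ) (hN : 2 ≤ N)
    (A : Matrix (Fin (N - 1)) (Fin (N - 1)) ℝ)
    (hA : ∀ i j : Fin (N - 1),
      A i j =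
        if (i : ℕ) = (j : ℕ) then -2
        else if (i : ℕ) + 1 = (j : ℕ) ∨ (j : ℕ) + 1 = (i : ℕ) then 1
        else 0)
    (h γ k : ℝ) (hh : 0 < h) (hγ : 0 < γ) (hk : 0 < k)
    (hkγ : k * γ < 2) (hkh : k / h ^ 2 < γ / 4)
    (M : Matrix (Fin (N - 1) ⊕ Fin (N - 1)) (Fin (N - 1) ⊕ Fin (N - 1)) ℂ)
    (hM : M = Matrix.fromBlocks 0 1
      (((1 / h ^ 2 : ℝ) : ℂ) • A.map (fun x => (x : ℂ))) (-(γ : ℂ) • 1)) :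
    ∀ μ ∈ spectrum ℂ ((1 : Matrix (Fin (N - 1) ⊕ Fin (N - 1))
        (Fin (N - 1) ⊕ Fin (N - 1)) ℂ) + (k : ℂ) • M),
      ‖μ‖ < 1 :=
  explicit_scheme_stable_general N A hA h γ k hh hk hkγ hkh M hM
end

section
/- Let N ≥ 2 be an integer, let A be the (N−1)×(N−1) real tridiagonal matrix with −2 on the diagonal and 1 on the sub- and super-diagonals, let h > 0 and γ ≥ 0 be real numbers, and let M be the (2N−2)×(2N−2) complex block matrix M = [[0, I],[(1/h²)A, −γ I]]. Then every eigenvalue λ of M satisfies Re λ ≤ 0. -/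
/-!
If `(u, w)` is an eigenvector of `M` for `λ`, then `w = λ u` and `h⁻² A u = (λ² + γ λ) u`.
The matrix `-A` is Hermitian and weakly diagonally dominant with nonnegative diagonal, hence
positive semidefinite by Gershgorin's theorem; so `λ² + γ λ` is real and nonpositive. For
`γ ≥ 0` this forces `Re λ ≤ 0`: either `Im λ ≠ 0`, and then `Re λ = -γ/2`, or `λ` is real with
`λ (λ + γ) ≤ 0`.
-/

open scoped Matrix ComplexOrder
open Finset

namespace Matrix

variable {n : Type*} [Fintype n] [DecidableEq n]

theorem mem_spectrum_iff_exists_mulVec_eq_smul {K : Type*} [Field K] {A : Matrix n n K} {μ : K} :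
    μ ∈ spectrum K A ↔ ∃ v ≠ 0, A *ᵥ v = μ • v := by
  simp only [← spectrum_toLin', ← Module.End.hasEigenvalue_iff_mem_spectrum,
    Module.End.hasEigenvalue_iff, Submodule.ne_bot_iff, Module.End.mem_eigenspace_iff,
    toLin'_apply]
  tauto

theorem sq_add_mul_mem_spectrum_of_mem_spectrum_fromBlocks {K : Type*} [Field K]
    {B : Matrix n n K} {c μ : K}
    (hμ : μ ∈ spectrum K (fromBlocks 0 1 B (-c • 1) : Matrix (n ⊕ n) (n ⊕ n) K)) :
    μ ^ 2 + c * μ ∈ spectrum K B := by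
  obtain ⟨v, hv0, hv⟩ := mem_spectrum_iff_exists_mulVec_eq_smul.mp hμ
  have hw (i : n) : v (Sum.inr i) = μ * v (Sum.inl i) := by
    simpa [fromBlocks_mulVec] using congrFun hv (Sum.inl i)
  have hBu : B *ᵥ (v ∘ Sum.inl) = (μ ^ 2 + c * μ) • (v ∘ Sum.inl) := funext fun i ↦ by
    have := congrFun hv (Sum.inr i)
    simp only [fromBlocks_mulVec, Sum.elim_inr, Pi.add_apply, smul_mulVec, one_mulVec,
      Pi.smul_apply, smul_eq_mul, Function.comp_apply, hw] at this ⊢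
    linear_combination this
  refine mem_spectrum_iff_exists_mulVec_eq_smul.mpr ⟨_, fun hu ↦ hv0 (funext ?_), hBu⟩
  have hu (i : n) : v (Sum.inl i) = 0 := congrFun hu i
  rintro (i | i) <;> simp [hw, hu]

variable {𝕜 : Type*} [RCLike 𝕜]

theorem IsHermitian.posSemidef_of_sum_norm_le_re_diag {A : Matrix n n 𝕜} (hA : A.IsHermitian)
    (hdom : ∀ k, ∑ j ∈ univ.erase k, ‖A k j‖ ≤ RCLike.re (A k k)) : A.PosSemidef := by
  refine posSemidef_iff_isHermitian_and_spectrum_nonneg.mpr ⟨hA, fun μ hμ ↦ ?_⟩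
  obtain ⟨k, hk⟩ := eigenvalue_mem_ball
    (Module.End.hasEigenvalue_iff_mem_spectrum.mpr ((spectrum_toLin' A).symm ▸ hμ))
  obtain ⟨r, -, rfl⟩ := hA.spectrum_eq_image_range ▸ hμ
  rw [Metric.mem_closedBall, dist_comm, dist_eq_norm] at hk
  have := (RCLike.re_le_norm (A k k - r)).trans (hk.trans (hdom k))
  simp only [map_sub, RCLike.ofReal_re] at this
  exact RCLike.nonneg_iff.mpr ⟨by simpa using this, by simp⟩

end Matrix

theorem Complex.re_nonpos_of_sq_add_mul_nonpos {γ : ℝ} (hγ : 0 ≤ γ) {z : ℂ}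
    (hz : z ^ 2 + γ * z ≤ 0) : z.re ≤ 0 := by
  obtain ⟨hre, him⟩ := Complex.nonpos_iff.mp hz
  simp only [sq, add_re, add_im, mul_re, mul_im, ofReal_re, ofReal_im] at hre him
  by_contra! hpos
  have hzim : z.im = 0 := by
    have : z.im * (2 * z.re + γ) = 0 := by linear_combination him
    exact (mul_eq_zero.mp this).resolve_right (by positivity)
  nlinarith

theorem Fin.card_filter_adjacent_le_two {n : ℕ} (k : Fin n) :
    #{j : Fin n | (k : ℕ) + 1 = j ∨ (j : ℕ) + 1 = k} ≤ 2 :=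
  calc _ ≤ #({(k : ℕ) + 1, (k : ℕ) - 1} : Finset ℕ) := by
        refine card_le_card_of_injOn Fin.val (fun j hj ↦ ?_) Fin.val_injective.injOn
        simp only [coe_filter, mem_univ, true_and, Set.mem_ofPred_eq, coe_insert, coe_singleton,
          Set.mem_insert_iff, Set.mem_singleton_iff] at hj ⊢
        omega
    _ ≤ 2 := card_le_two

open Matrix

def secondDifference (n : ℕ) : Matrix (Fin n) (Fin n) ℝ :=
  of fun i j ↦
    if (i : ℕ) = (j : ℕ) then -2
    else if (i : ℕ) + 1 = (j : ℕ) ∨ (j : ℕ) + 1 = (i : ℕ) then 1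
    else 0

theorem secondDifference_apply_of_ne {n : ℕ} {i j : Fin n} (hij : i ≠ j) :
    secondDifference n i j = if (i : ℕ) + 1 = j ∨ (j : ℕ) + 1 = i then 1 else 0 :=
  if_neg (Fin.val_ne_of_ne hij)

theorem secondDifference_isHermitian (n : ℕ) : (secondDifference n).IsHermitian := by
  ext i j
  simp only [conjTranspose_apply, star_trivial, secondDifference, of_apply]
  grind

theorem posSemidef_neg_map_secondDifference (n : ℕ) :
    (-(secondDifference n).map ((↑) : ℝ → ℂ)).PosSemidef := by
  refine (((secondDifference_isHermitian n).map _ fun _ ↦ by simp).neg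
    ).posSemidef_of_sum_norm_le_re_diag fun k ↦ ?_
  calc ∑ j ∈ univ.erase k, ‖(-(secondDifference n).map ((↑) : ℝ → ℂ)) k j‖
      = ∑ j ∈ univ.erase k, if (k : ℕ) + 1 = j ∨ (j : ℕ) + 1 = k then (1 : ℝ) else 0 := by
        refine sum_congr rfl fun j hj ↦ ?_
        rw [neg_apply, map_apply, norm_neg, Complex.norm_real,
          secondDifference_apply_of_ne (mem_erase.mp hj).1.symm]
        split_ifs <;> norm_num
    _ ≤ ∑ j : Fin n, if (k : ℕ) + 1 = j ∨ (j : ℕ) + 1 = k then (1 : ℝ) else 0 :=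
        sum_le_sum_of_subset_of_nonneg (erase_subset k univ) fun _ _ _ ↦ by positivity
    _ ≤ 2 := by
        rw [sum_boole]
        exact_mod_cast Fin.card_filter_adjacent_le_two k
    _ = RCLike.re ((-(secondDifference n).map ((↑) : ℝ → ℂ)) k k) := by
        simp [secondDifference]

theorem semidiscrete_damped_wave_spectrum_left_halfplane_general (N : ℕ)
    (A : Matrix (Fin (N - 1)) (Fin (N - 1)) ℝ)
    (hA : ∀ i j : Fin (N - 1),
      A i j =
        if (i : ℕ) = (j : ℕ) then -2
        else if (i : ℕ) + 1 = (j : ℕ) ∨ (j : ℕ) + 1 = (i : ℕ) then 1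
        else 0)
    (h γ : ℝ) (hγ : 0 ≤ γ)
    (M : Matrix (Fin (N - 1) ⊕ Fin (N - 1)) (Fin (N - 1) ⊕ Fin (N - 1)) ℂ)
    (hM : M = Matrix.fromBlocks 0 1
      (((1 / h ^ 2 : ℝ) : ℂ) • A.map (fun x => (x : ℂ))) (-(γ : ℂ) • 1)) :
    ∀ lam ∈ spectrum ℂ M, lam.re ≤ 0 := by
  intro lam hlam
  obtain rfl : A = secondDifference (N - 1) := ext fun i j ↦ hA i j
  subst hM
  have hB :
      (-(((1 / h ^ 2 : ℝ) : ℂ) • (secondDifference (N - 1)).map ((↑) : ℝ → ℂ))).PosSemidef := by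
    rw [← smul_neg]
    exact (posSemidef_neg_map_secondDifference _).smul (by norm_cast; positivity)
  have hchar := sq_add_mul_mem_spectrum_of_mem_spectrum_fromBlocks hlam
  have hnonneg : 0 ≤ -(lam ^ 2 + γ * lam) :=
    (posSemidef_iff_isHermitian_and_spectrum_nonneg.mp hB).2
      (by rwa [← spectrum.neg_eq, Set.mem_neg, neg_neg])
  exact Complex.re_nonpos_of_sq_add_mul_nonpos hγ (neg_nonneg.mp hnonneg)

/-- The spectrum of the semidiscretized damped wave operator
`M = [[0, I],[(1/h²)A, −γI]]` (with `γ ≥ 0`) lies in the closed left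
half-plane: every eigenvalue `λ` of `M` satisfies `Re λ ≤ 0`. -/
theorem semidiscrete_damped_wave_spectrum_left_halfplane (N : ℕ) (hN : 2 ≤ N)
    (A : Matrix (Fin (N - 1)) (Fin (N - 1)) ℝ)
    (hA : ∀ i j : Fin (N - 1),
      A i j =
        if (i : ℕ) = (j : ℕ) then -2
        else if (i : ℕ) + 1 = (j : ℕ) ∨ (j : ℕ) + 1 = (i : ℕ) then 1
        else 0)
    (h γ : ℝ) (hh : 0 < h) (hγ : 0 ≤ γ)
    (M : Matrix (Fin (N - 1) ⊕ Fin (N - 1)) (Fin (N - 1) ⊕ Fin (N - 1)) ℂ)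
    (hM : M = Matrix.fromBlocks 0 1
      (((1 / h ^ 2 : ℝ) : ℂ) • A.map (fun x => (x : ℂ))) (-(γ : ℂ) • 1)) :
    ∀ lam ∈ spectrum ℂ M, lam.re ≤ 0 :=
  semidiscrete_damped_wave_spectrum_left_halfplane_general N A hA h γ hγ M hM
end
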